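/- arXiv:2111.13121 — 2 statements merged into one kernel-verified Lean document; each statement's English description precedes it below -/
import Mathlib

section
/- Let n ≥ 1, let task w have duration η ≥ 1 and minimum rest time γ ≥ 1, and let z, z' : {1,…,n} → {0,1} be the start indicators of tasks w and w+1 respectively, each taking the value 1 exactly once, say z_e = 1 and z'_{e'} = 1. Define y_t = Σ_{i=1}^{min(η,t)} z_{t−i+1}, and assume e + η − 1 ≤ n and e' ≥ e + η (task w+1 starts no earlier than the completion of task w). If the minimum-rest constraint Σ_{i=1}^{min(γ, n−t)} z'_{t+i} ≤ Σ_{j=1}^{t} z_j − y_t holds at t = e + η − 1, then e' ≥ e + η + γ; i.e., the rest time between the two tasks is at least γ. -/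
/-- if task `w` (duration `η`, starting at `e`, completing within the
horizon) is followed by task `w+1` starting at `e' ≥ e + η`, and the minimum-rest
constraint holds at `t = e + η - 1`, then the rest time is at least `γ`,
i.e. `e' ≥ e + η + γ`. -/
theorem stmt_6 (n η γ : ℕ) (hn : 1 ≤ n) (hη : 1 ≤ η) (hγ : 1 ≤ γ)
    (z z' : ℕ → ℤ) (e e' : ℕ)
    (he : 1 ≤ e) (hen : e ≤ n) (hze : z e = 1)
    (hz : ∀ t, 1 ≤ t → t ≤ n → t ≠ e → z t = 0)
    (he' : 1 ≤ e') (he'n : e' ≤ n) (hze' : z' e' = 1)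
    (hz' : ∀ t, 1 ≤ t → t ≤ n → t ≠ e' → z' t = 0)
    (y : ℕ → ℤ)
    (hy : ∀ t, y t = ∑ i ∈ Finset.Icc 1 (min η t), z (t - i + 1))
    (hcomp : e + η - 1 ≤ n) (horder : e + η ≤ e')
    (hconstr : ∑ i ∈ Finset.Icc 1 (min γ (n - (e + η - 1))), z' (e + η - 1 + i)
      ≤ (∑ j ∈ Finset.Icc 1 (e + η - 1), z j) - y (e + η - 1)) :
    e + η + γ ≤ e' := by
  by_contra h
  push_neg at h
  set t := e + η - 1 with htdef
  have hsumz : (∑ j ∈ Finset.Icc 1 t, z j) = 1 := by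
    rw [Finset.sum_eq_single_of_mem e (by simp [Finset.mem_Icc]; omega)]
    · exact hze
    · intro j hj hje
      simp only [Finset.mem_Icc] at hj
      exact hz j hj.1 (by omega) hje
  have hyt : y t = 1 := by
    rw [hy t]
    have hmin : min η t = η := by omega
    rw [hmin]
    rw [Finset.sum_eq_single_of_mem η (by simp [Finset.mem_Icc]; omega)]
    · have : t - η + 1 = e := by omega
      rw [this]; exact hze
    · intro i hi hiη
      simp only [Finset.mem_Icc] at hi
      exact hz _ (by omega) (by omega) (by omega)
  have hmem : e' - t ∈ Finset.Icc 1 (min γ (n - t)) := by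
    simp only [Finset.mem_Icc]; omega
  have hle : (1 : ℤ) ≤ ∑ i ∈ Finset.Icc 1 (min γ (n - t)), z' (t + i) := by
    have := Finset.single_le_sum (f := fun i => z' (t + i))
      (fun i hi => by
        simp only [Finset.mem_Icc] at hi
        show 0 ≤ z' (t + i)
        rcases eq_or_ne (t + i) e' with h1 | h1
        · rw [h1, hze']; norm_num
        · rw [hz' _ (by omega) (by omega) h1]) hmem
    have ht' : t + (e' - t) = e' := by omega
    rw [ht', hze'] at this
    exact this
  rw [hsumz, hyt] at hconstr
  omega
end

section
/- Let n ≥ 1, let L be a finite nonempty set of links, and consider a single project with tasks w = 1,…,W, where task w has duration η_w ≥ 1, blocking values b_{wl} ≥ 0 for l ∈ L, and start indicators z_{wt} ∈ {0,1} (t = 1,…,n) with Σ_{t} z_{wt} = 1 and z_{wt} = 0 for t > n − η_w + 1. Define y_{wt} = Σ_{i=1}^{min(η_w,t)} z_{w,t−i+1} and assume the tasks do not overlap: Σ_{w=1}^{W} y_{wt} ≤ 1 for every t. Then Σ_{t=1}^{n} max_{l∈L} Σ_{w=1}^{W} b_{wl} y_{wt} = Σ_{w=1}^{W} η_w · max_{l∈L}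 b_{wl}; i.e., the minimum possible lower-bound blocking contribution of a fully scheduled project equals the sum over its tasks of the task duration times the task's largest per-link blocking value. -/
/-- for a single fully scheduled project with non-overlapping tasks,
the lower-bound blocking contribution `∑_t max_l ∑_w b w l * y w t` equals
`∑_w η w * max_l b w l`. -/
theorem stmt_9 {L : Type*} [Fintype L] [Nonempty L]
    (n W : ℕ) (hn : 1 ≤ n)
    (η : ℕ → ℕ) (hη : ∀ w, 1 ≤ w → w ≤ W → 1 ≤ η w)
    (b : ℕ → L → ℝ) (hb : ∀ w l, 1 ≤ w → w ≤ W → 0 ≤ b w l)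
    (z : ℕ → ℕ → ℝ)
    (hz01 : ∀ w t, 1 ≤ w → w ≤ W → 1 ≤ t → t ≤ n → z w t = 0 ∨ z w t = 1)
    (hz1 : ∀ w, 1 ≤ w → w ≤ W → ∑ t ∈ Finset.Icc 1 n, z w t = 1)
    (hzhor : ∀ w t, 1 ≤ w → w ≤ W → 1 ≤ t → t ≤ n →
      (n : ℤ) - (η w : ℤ) + 1 < (t : ℤ) → z w t = 0)
    (y : ℕ → ℕ → ℝ)
    (hy : ∀ w t, 1 ≤ w → w ≤ W → 1 ≤ t → t ≤ n →
      y w t = ∑ i ∈ Finset.Icc 1 (min (η w) t), z w (t - i + 1))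
    (hnov : ∀ t, 1 ≤ t → t ≤ n → ∑ w ∈ Finset.Icc 1 W, y w t ≤ 1) :
    ∑ t ∈ Finset.Icc 1 n,
        Finset.univ.sup' Finset.univ_nonempty
          (fun l => ∑ w ∈ Finset.Icc 1 W, b w l * y w t)
      = ∑ w ∈ Finset.Icc 1 W,
          (η w : ℝ) * Finset.univ.sup' Finset.univ_nonempty (fun l => b w l) := by
  classical
  have hz0 : ∀ w t, 1 ≤ w → w ≤ W → 1 ≤ t → t ≤ n → 0 ≤ z w t := by
    intro w t hw1 hw2 ht1 ht2
    rcases hz01 w t hw1 hw2 ht1 ht2 with h | h <;> simp [h]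
  have hy0 : ∀ w t, 1 ≤ w → w ≤ W → 1 ≤ t → t ≤ n → 0 ≤ y w t := by
    intro w t hw1 hw2 ht1 ht2
    rw [hy w t hw1 hw2 ht1 ht2]
    refine Finset.sum_nonneg (fun i hi => ?_)
    simp only [Finset.mem_Icc, le_min_iff] at hi
    exact hz0 w (t - i + 1) hw1 hw2 (by omega) (by omega)
  have hyle : ∀ w t, 1 ≤ w → w ≤ W → 1 ≤ t → t ≤ n → y w t ≤ 1 := by
    intro w t hw1 hw2 ht1 ht2
    rw [hy w t hw1 hw2 ht1 ht2]
    have hinj : ∀ a ∈ Finset.Icc 1 (min (η w) t), ∀ c ∈ Finset.Icc 1 (min (η w) t),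
        t - a + 1 = t - c + 1 → a = c := by
      intro a ha c hc h
      simp only [Finset.mem_Icc, le_min_iff] at ha hc
      omega
    rw [show ∑ i ∈ Finset.Icc 1 (min (η w) t), z w (t - i + 1)
        = ∑ s ∈ (Finset.Icc 1 (min (η w) t)).image (fun i => t - i + 1), z w s from
      (Finset.sum_image (f := fun s => z w s) (g := fun i => t - i + 1) hinj).symm]
    calc ∑ s ∈ (Finset.Icc 1 (min (η w) t)).image (fun i => t - i + 1), z w s
        ≤ ∑ s ∈ Finset.Icc 1 n, z w s := by
          refine Finset.sum_le_sum_of_subset_of_nonneg ?_ ?_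
          · intro s hs
            simp only [Finset.mem_image, Finset.mem_Icc, le_min_iff] at hs ⊢
            obtain ⟨i, hi, rfl⟩ := hs
            omega
          · intro s hs _
            simp only [Finset.mem_Icc] at hs
            exact hz0 w s hw1 hw2 hs.1 hs.2
      _ = 1 := hz1 w hw1 hw2
  -- if y is nonzero it equals 1
  have hy1 : ∀ w t, 1 ≤ w → w ≤ W → 1 ≤ t → t ≤ n → y w t ≠ 0 → y w t = 1 := by
    intro w t hw1 hw2 ht1 ht2 hne
    refine le_antisymm (hyle w t hw1 hw2 ht1 ht2) ?_
    rw [hy w t hw1 hw2 ht1 ht2] at hne ⊢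
    obtain ⟨i, hi, hzi⟩ := Finset.exists_ne_zero_of_sum_ne_zero hne
    simp only [Finset.mem_Icc, le_min_iff] at hi
    have h1 : z w (t - i + 1) = 1 := by
      rcases hz01 w (t - i + 1) hw1 hw2 (by omega) (by omega) with h | h
      · exact absurd h hzi
      · exact h
    calc (1 : ℝ) = z w (t - i + 1) := h1.symm
      _ ≤ ∑ j ∈ Finset.Icc 1 (min (η w) t), z w (t - j + 1) := by
          refine Finset.single_le_sum (f := fun j => z w (t - j + 1)) (fun j hj => ?_)
            (Finset.mem_Icc.mpr ⟨hi.1, le_min hi.2.1 hi.2.2⟩)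
          simp only [Finset.mem_Icc, le_min_iff] at hj
          exact hz0 w (t - j + 1) hw1 hw2 (by omega) (by omega)
  -- Lemma A
  have hA : ∀ t, 1 ≤ t → t ≤ n →
      Finset.univ.sup' Finset.univ_nonempty
        (fun l => ∑ w ∈ Finset.Icc 1 W, b w l * y w t)
      = ∑ w ∈ Finset.Icc 1 W,
          y w t * Finset.univ.sup' Finset.univ_nonempty (fun l => b w l) := by
    intro t ht1 ht2
    apply le_antisymm
    · refine Finset.sup'_le _ _ (fun l _ => Finset.sum_le_sum (fun w hw => ?_))
      simp only [Finset.mem_Icc] at hw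
      rw [mul_comm]
      exact mul_le_mul_of_nonneg_left (Finset.le_sup' _ (Finset.mem_univ l))
        (hy0 w t hw.1 hw.2 ht1 ht2)
    · by_cases hcase : ∀ w ∈ Finset.Icc 1 W, y w t = 0
      · have hrhs : ∑ w ∈ Finset.Icc 1 W,
            y w t * Finset.univ.sup' Finset.univ_nonempty (fun l => b w l) = 0 :=
          Finset.sum_eq_zero (fun w hw => by rw [hcase w hw, zero_mul])
        rw [hrhs]
        obtain ⟨l⟩ := ‹Nonempty L›
        refine le_trans ?_ (Finset.le_sup' _ (Finset.mem_univ l))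
        refine Finset.sum_nonneg (fun w hw => ?_)
        simp only [Finset.mem_Icc] at hw
        exact mul_nonneg (hb w l hw.1 hw.2) (hy0 w t hw.1 hw.2 ht1 ht2)
      · push_neg at hcase
        obtain ⟨w0, hw0mem, hw0ne⟩ := hcase
        have hw0r := Finset.mem_Icc.mp hw0mem
        have hy1' : y w0 t = 1 := hy1 w0 t hw0r.1 hw0r.2 ht1 ht2 hw0ne
        have herase : ∀ w ∈ (Finset.Icc 1 W).erase w0, y w t = 0 := by
          have hsum : y w0 t + ∑ w ∈ (Finset.Icc 1 W).erase w0, y w t ≤ 1 := by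
            rw [Finset.add_sum_erase _ (fun w => y w t) hw0mem]
            exact hnov t ht1 ht2
          have hnn : ∀ w ∈ (Finset.Icc 1 W).erase w0, 0 ≤ y w t := by
            intro w hw
            have hw' := Finset.mem_Icc.mp (Finset.mem_of_mem_erase hw)
            exact hy0 w t hw'.1 hw'.2 ht1 ht2
          have h0 : ∑ w ∈ (Finset.Icc 1 W).erase w0, y w t = 0 := by
            have h1 : ∑ w ∈ (Finset.Icc 1 W).erase w0, y w t ≤ 0 := by
              rw [hy1'] at hsum; linarith
            exact le_antisymm h1 (Finset.sum_nonneg hnn)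
          exact fun w hw => le_antisymm (by
            have := Finset.single_le_sum hnn hw
            rw [h0] at this; exact this) (hnn w hw) |>.symm ▸
            (fun w hw => ((Finset.sum_eq_zero_iff_of_nonneg hnn).mp h0) w hw) w hw
        obtain ⟨l0, _, hl0⟩ := Finset.exists_mem_eq_sup' (Finset.univ_nonempty)
          (fun l => b w0 l)
        have hrhs : ∑ w ∈ Finset.Icc 1 W,
            y w t * Finset.univ.sup' Finset.univ_nonempty (fun l => b w l)
            = Finset.univ.sup' Finset.univ_nonempty (fun l => b w0 l) := by
          rw [← Finset.add_sum_erase _ (fun w => y w t * Finset.univ.sup' Finset.univ_nonempty (fun l => b w l)) hw0mem, hy1', one_mul,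
            Finset.sum_eq_zero (fun w hw => by rw [herase w hw, zero_mul]), add_zero]
        have hlhs : ∑ w ∈ Finset.Icc 1 W, b w l0 * y w t = b w0 l0 := by
          rw [← Finset.add_sum_erase _ (fun w => b w l0 * y w t) hw0mem, hy1', mul_one,
            Finset.sum_eq_zero (fun w hw => by rw [herase w hw, mul_zero]), add_zero]
        rw [hrhs, hl0]
        exact le_trans (le_of_eq hlhs.symm)
          (Finset.le_sup' (fun l => ∑ w ∈ Finset.Icc 1 W, b w l * y w t) (Finset.mem_univ l0))
  -- Lemma B
  have hB : ∀ w, 1 ≤ w → w ≤ W → ∑ t ∈ Finset.Icc 1 n, y w t = (η w : ℝ) := by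
    intro w hw1 hw2
    have h1 : ∑ t ∈ Finset.Icc 1 n, y w t
        = ∑ t ∈ Finset.Icc 1 n, ∑ i ∈ Finset.Icc 1 (min (η w) t), z w (t - i + 1) := by
      refine Finset.sum_congr rfl (fun t ht => ?_)
      simp only [Finset.mem_Icc] at ht
      exact hy w t hw1 hw2 ht.1 ht.2
    rw [h1, Finset.sum_sigma']
    have h2 : ∑ p ∈ (Finset.Icc 1 n).sigma (fun t => Finset.Icc 1 (min (η w) t)),
        z w (p.1 - p.2 + 1)
        = ∑ p ∈ (Finset.Icc 1 n).sigma (fun s => Finset.Icc 1 (min (η w) (n - s + 1))),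
        z w p.1 := by
      refine Finset.sum_nbij' (fun p => ⟨p.1 - p.2 + 1, p.2⟩) (fun p => ⟨p.1 + p.2 - 1, p.2⟩)
        ?_ ?_ ?_ ?_ ?_
      · rintro ⟨t, i⟩ hp
        simp only [Finset.mem_sigma, Finset.mem_Icc, le_min_iff] at hp ⊢
        omega
      · rintro ⟨s, i⟩ hp
        simp only [Finset.mem_sigma, Finset.mem_Icc, le_min_iff] at hp ⊢
        omega
      · rintro ⟨t, i⟩ hp
        simp only [Finset.mem_sigma, Finset.mem_Icc, le_min_iff] at hp
        simp only [Sigma.mk.inj_iff, heq_eq_eq, and_true]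
        omega
      · rintro ⟨s, i⟩ hp
        simp only [Finset.mem_sigma, Finset.mem_Icc, le_min_iff] at hp
        simp only [Sigma.mk.inj_iff, heq_eq_eq, and_true]
        omega
      · rintro ⟨t, i⟩ hp
        rfl
    rw [h2, Finset.sum_sigma]
    have h3 : ∀ s ∈ Finset.Icc 1 n,
        ∑ _i ∈ Finset.Icc 1 (min (η w) (n - s + 1)), z w s = (η w : ℝ) * z w s := by
      intro s hs
      simp only [Finset.mem_Icc] at hs
      rw [Finset.sum_const, Nat.card_Icc]
      by_cases hzs : z w s = 0
      · rw [hzs, smul_zero, mul_zero]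
      · have hsle : (s : ℤ) ≤ (n : ℤ) - (η w : ℤ) + 1 := by
          by_contra hcon
          push_neg at hcon
          exact hzs (hzhor w s hw1 hw2 hs.1 hs.2 hcon)
        have : min (η w) (n - s + 1) + 1 - 1 = η w := by omega
        rw [this, nsmul_eq_mul]
    rw [Finset.sum_congr rfl h3, ← Finset.mul_sum, hz1 w hw1 hw2, mul_one]
  -- combine
  calc ∑ t ∈ Finset.Icc 1 n,
        Finset.univ.sup' Finset.univ_nonempty
          (fun l => ∑ w ∈ Finset.Icc 1 W, b w l * y w t)
      = ∑ t ∈ Finset.Icc 1 n, ∑ w ∈ Finset.Icc 1 W,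
          y w t * Finset.univ.sup' Finset.univ_nonempty (fun l => b w l) := by
        refine Finset.sum_congr rfl (fun t ht => ?_)
        simp only [Finset.mem_Icc] at ht
        exact hA t ht.1 ht.2
    _ = ∑ w ∈ Finset.Icc 1 W, ∑ t ∈ Finset.Icc 1 n,
          y w t * Finset.univ.sup' Finset.univ_nonempty (fun l => b w l) :=
        Finset.sum_comm
    _ = ∑ w ∈ Finset.Icc 1 W,
          (η w : ℝ) * Finset.univ.sup' Finset.univ_nonempty (fun l => b w l) := by
        refine Finset.sum_congr rfl (fun w hw => ?_)
        simp only [Finset.mem_Icc] at hw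
        rw [← Finset.sum_mul, hB w hw.1 hw.2]
end
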